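/- arXiv:0704.1008 — 6 statements merged into one kernel-verified Lean document; each statement's English description precedes it below -/
import Mathlib

section
/- Let A be an abelian category and let E• be a cochain complex with a decoration M•, i.e., a subobject Mⁿ ⊆ Eⁿ for each n (not necessarily preserved by the differential δ). Define H^{-1,n}(E•,M•) = ker(Mⁿ → E^{n+1}/M^{n+1}) and H^{0,n}(E•,M•) = coker(Mⁿ → E^{n+1}/M^{n+1}), where the map is induced by δ. Then the objects H^{-1,n} assemble into a cochain complex 𝓗^{-1}(E•,M•) with differentials induced by δ, and similarly the H^{0,n} assemble into a complex 𝓗^{0}(E•,M•). -/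
/-!
The composite `H^{-1,n} ⟶ Mⁿ ⟶ Eⁿ ⟶ E^{n+1}` vanishes modulo `M^{n+1}`, so it factors through
`M^{n+1}`, and then through `H^{-1,n+1}` because `δ² = 0`. Dually `E^{n+1} ⟶ E^{n+2} ⟶ H^{0,n+1}`
kills `M^{n+1}` and, by `δ² = 0`, the image of `Mⁿ`. Both differentials square to zero since
they are induced by `δ`, and `H^{-1,n} ⟶ Eⁿ` is mono while `E^{n+1} ⟶ H^{0,n}` is epi.
-/

open CategoryTheory CategoryTheory.Limits

universe v u

/-- A decorated complex in an abelian category: a cochain complex together with a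
graded subobject `M`, not necessarily respected by the differential. -/
structure DecoratedComplex (A : Type u) [Category.{v} A] [Abelian A] where
  X : ℤ → A
  d : ∀ n : ℤ, X n ⟶ X (n + 1)
  d_sq : ∀ n : ℤ, d n ≫ d (n + 1) = 0
  M : ℤ → A
  ι : ∀ n : ℤ, M n ⟶ X n
  mono : ∀ n : ℤ, Mono (ι n)

namespace DecoratedComplex

variable {A : Type u} [Category.{v} A] [Abelian A] (D : DecoratedComplex A)

/-- The quotient `Eⁿ/Mⁿ`. -/
noncomputable abbrev Q (n : ℤ) : A := cokernel (D.ι n)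

/-- The canonical map `Mⁿ ⟶ E^{n+1}/M^{n+1}` induced by the differential. -/
noncomputable def φ (n : ℤ) : D.M n ⟶ D.Q (n + 1) :=
  D.ι n ≫ D.d n ≫ cokernel.π (D.ι (n + 1))

/-- `H^{-1,n}` of a decorated complex. -/
noncomputable abbrev Hneg (n : ℤ) : A := kernel (D.φ n)

/-- `H^{0,n}` of a decorated complex. -/
noncomputable abbrev Hpos (n : ℤ) : A := cokernel (D.φ n)

end DecoratedComplex

namespace DecoratedComplex

variable {A : Type u} [Category.{v} A] [Abelian A] (D : DecoratedComplex A) (n : ℤ)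

instance : Mono (D.ι n) := D.mono n

lemma d_comp_d_assoc {Z : A} (h : D.X (n + 1 + 1) ⟶ Z) : D.d n ≫ D.d (n + 1) ≫ h = 0 := by
  rw [← Category.assoc, D.d_sq, zero_comp]

lemma φ_comp {Z : A} (h : D.Q (n + 1) ⟶ Z) :
    D.φ n ≫ h = D.ι n ≫ D.d n ≫ cokernel.π (D.ι (n + 1)) ≫ h := by
  simp only [φ, Category.assoc]

noncomputable def hnegToM : D.Hneg n ⟶ D.M (n + 1) :=
  Abelian.monoLift (D.ι (n + 1)) (kernel.ι (D.φ n) ≫ D.ι n ≫ D.d n) <| by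
    rw [Category.assoc, Category.assoc]
    exact kernel.condition (D.φ n)

lemma hnegToM_comp_ι : D.hnegToM n ≫ D.ι (n + 1) = kernel.ι (D.φ n) ≫ D.ι n ≫ D.d n :=
  Abelian.monoLift_comp _ _ _

lemma hnegToM_comp_φ : D.hnegToM n ≫ D.φ (n + 1) = 0 := by
  rw [φ, ← Category.assoc, hnegToM_comp_ι]
  simp only [Category.assoc, d_comp_d_assoc, comp_zero]

noncomputable def dNeg : D.Hneg n ⟶ D.Hneg (n + 1) :=
  kernel.lift _ (D.hnegToM n) (D.hnegToM_comp_φ n)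

lemma dNeg_comp_ι :
    D.dNeg n ≫ kernel.ι (D.φ (n + 1)) ≫ D.ι (n + 1) = kernel.ι (D.φ n) ≫ D.ι n ≫ D.d n := by
  rw [dNeg, kernel.lift_ι_assoc, hnegToM_comp_ι]

lemma dNeg_comp_dNeg : D.dNeg n ≫ D.dNeg (n + 1) = 0 := by
  rw [← cancel_mono (kernel.ι (D.φ (n + 1 + 1)) ≫ D.ι (n + 1 + 1)), zero_comp,
    Category.assoc, dNeg_comp_ι, ← Category.assoc (kernel.ι _), ← Category.assoc (D.dNeg n),
    dNeg_comp_ι]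
  simp only [Category.assoc, D.d_sq, comp_zero]

noncomputable def qToHpos : D.Q (n + 1) ⟶ D.Hpos (n + 1) :=
  cokernel.desc (D.ι (n + 1)) (D.d (n + 1) ≫ cokernel.π (D.ι (n + 1 + 1)) ≫
    cokernel.π (D.φ (n + 1))) <| by
    simpa only [φ_comp] using cokernel.condition (D.φ (n + 1))

lemma π_comp_qToHpos : cokernel.π (D.ι (n + 1)) ≫ D.qToHpos n =
    D.d (n + 1) ≫ cokernel.π (D.ι (n + 1 + 1)) ≫ cokernel.π (D.φ (n + 1)) :=
  cokernel.π_desc _ _ _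

lemma φ_comp_qToHpos : D.φ n ≫ D.qToHpos n = 0 := by
  rw [φ_comp, π_comp_qToHpos, d_comp_d_assoc, comp_zero]

noncomputable def dPos : D.Hpos n ⟶ D.Hpos (n + 1) :=
  cokernel.desc _ (D.qToHpos n) (D.φ_comp_qToHpos n)

lemma π_comp_π_comp_dPos : cokernel.π (D.ι (n + 1)) ≫ cokernel.π (D.φ n) ≫ D.dPos n =
    D.d (n + 1) ≫ cokernel.π (D.ι (n + 1 + 1)) ≫ cokernel.π (D.φ (n + 1)) := by
  rw [dPos, cokernel.π_desc, π_comp_qToHpos]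

lemma dPos_comp_dPos : D.dPos n ≫ D.dPos (n + 1) = 0 := by
  rw [← cancel_epi (cokernel.π (D.ι (n + 1)) ≫ cokernel.π (D.φ n)), comp_zero,
    Category.assoc, ← Category.assoc (cokernel.π (D.φ n)), ← Category.assoc, π_comp_π_comp_dPos]
  simp only [Category.assoc, π_comp_π_comp_dPos, d_comp_d_assoc]

end DecoratedComplex

open DecoratedComplex in
/-- The objects `H^{-1,n}` (resp. `H^{0,n}`) of a decorated complex assemble into a
cochain complex, with differentials induced by `δ`. -/
theorem decorated_cohomology_complexes {A : Type u} [Category.{v} A] [Abelian A]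
    (D : DecoratedComplex A) :
    ∃ (dneg : ∀ n : ℤ, D.Hneg n ⟶ D.Hneg (n + 1))
      (dpos : ∀ n : ℤ, D.Hpos n ⟶ D.Hpos (n + 1)),
      (∀ n : ℤ, dneg n ≫ kernel.ι (D.φ (n + 1)) ≫ D.ι (n + 1) =
          kernel.ι (D.φ n) ≫ D.ι n ≫ D.d n) ∧
      (∀ n : ℤ, dneg n ≫ dneg (n + 1) = 0) ∧
      (∀ n : ℤ, cokernel.π (D.ι (n + 1)) ≫ cokernel.π (D.φ n) ≫ dpos n =
          D.d (n + 1) ≫ cokernel.π (D.ι (n + 1 + 1)) ≫ cokernel.π (D.φ (n + 1))) ∧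
      (∀ n : ℤ, dpos n ≫ dpos (n + 1) = 0) :=
  ⟨D.dNeg, D.dPos, D.dNeg_comp_ι, D.dNeg_comp_dNeg, D.π_comp_π_comp_dPos, D.dPos_comp_dPos⟩
end

section
/- Let (E•, M•) and (F•, N•) be decorated complexes in an abelian category A, f : (E•,M•) → (F•,N•) a morphism of decorated complexes (a chain map with f(Mⁿ) ⊆ Nⁿ for all n), and Cone(f) its decorated mapping cone (the usual mapping cone E^{•+1} ⊕ F• with direct-sum decoration M^{•+1} ⊕ N•). Then for i = -1, 0 and all n there are isomorphisms H^{i,n}(Cone(f)) ≅ H^{i,n+1}(E•,M•) ⊕ H^{i,n}(F•,N•). -/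
open CategoryTheory CategoryTheory.Limits

universe v u

namespace DecoratedCone

variable {A : Type u} [Category.{v} A] [Abelian A]
variable (D D' : DecoratedComplex A) (f : ∀ n : ℤ, D.X n ⟶ D'.X n)

/-- The decoration mono of the decorated mapping cone:
`M^{n+1} ⊕ Nⁿ ⟶ E^{n+1} ⊕ Fⁿ`. -/
noncomputable def coneι (n : ℤ) :
    (D.M (n + 1) ⊞ D'.M n) ⟶ (D.X (n + 1) ⊞ D'.X n) :=
  biprod.map (D.ι (n + 1)) (D'.ι n)

/-- The differential of the mapping cone: `d(e, y) = (-δe, f(e) + δy)`. -/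
noncomputable def coned (n : ℤ) :
    (D.X (n + 1) ⊞ D'.X n) ⟶ (D.X (n + 1 + 1) ⊞ D'.X (n + 1)) :=
  biprod.lift (biprod.fst ≫ (-(D.d (n + 1))))
    (biprod.fst ≫ f (n + 1) + biprod.snd ≫ D'.d n)

/-- The map `Mⁿ_{Cone} ⟶ E^{n+1}_{Cone}/M^{n+1}_{Cone}` of the decorated cone. -/
noncomputable def coneφ (n : ℤ) :
    (D.M (n + 1) ⊞ D'.M n) ⟶ cokernel (coneι D D' (n + 1)) :=
  coneι D D' n ≫ coned D D' f n ≫ cokernel.π (coneι D D' (n + 1))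

end DecoratedCone

/-!
Modulo the decoration of the cone, `coneφ` is the block diagonal map `(φ_E, φ_F)`: its
off-diagonal block is induced by `f`, which sends `M` into `N` and hence vanishes in `F/N`, and the
sign of `-δ` is absorbed into an automorphism of the target. Kernels and cokernels of a direct sum
of maps are the direct sums of the kernels and cokernels.
-/

namespace CategoryTheory.Limits

variable {C : Type*} [Category C] [HasZeroMorphisms C] [HasBinaryBiproducts C]

noncomputable def kernelBiprodMapIso {X Y Z W : C} (f : X ⟶ Y) (g : Z ⟶ W) [HasKernel f]
    [HasKernel g] [HasKernel (biprod.map f g)] :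
    kernel (biprod.map f g) ≅ kernel f ⊞ kernel g where
  hom := biprod.lift
    (kernel.lift f (kernel.ι _ ≫ biprod.fst) <| by
      rw [Category.assoc, ← biprod.map_fst, kernel.condition_assoc, zero_comp])
    (kernel.lift g (kernel.ι _ ≫ biprod.snd) <| by
      rw [Category.assoc, ← biprod.map_snd, kernel.condition_assoc, zero_comp])
  inv := kernel.lift _ (biprod.map (kernel.ι f) (kernel.ι g)) (by ext <;> simp)
  hom_inv_id := by ext <;> simp
  inv_hom_id := by ext <;> simp

@[simps]
noncomputable def cokernelBiprodMapIso {X Y Z W : C} (f : X ⟶ Y) (g : Z ⟶ W) [HasCokernel f]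
    [HasCokernel g] [HasCokernel (biprod.map f g)] :
    cokernel (biprod.map f g) ≅ cokernel f ⊞ cokernel g where
  hom := cokernel.desc _ (biprod.map (cokernel.π f) (cokernel.π g)) (by ext <;> simp)
  inv := biprod.desc
    (cokernel.desc f (biprod.inl ≫ cokernel.π _) (by simp [← biprod.inl_map_assoc f g]))
    (cokernel.desc g (biprod.inr ≫ cokernel.π _) (by simp [← biprod.inr_map_assoc f g]))
  hom_inv_id := by ext <;> simp
  inv_hom_id := by ext <;> simp

end CategoryTheory.Limits

namespace DecoratedCone

variable {A : Type u} [Category.{v} A] [Abelian A] (D D' : DecoratedComplex A)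

theorem coneι_eq (n : ℤ) : coneι D D' n = biprod.map (D.ι (n + 1)) (D'.ι n) := rfl

theorem inl_coneι (n : ℤ) : biprod.inl ≫ coneι D D' n = D.ι (n + 1) ≫ biprod.inl := by
  simp [coneι]

theorem inr_coneι (n : ℤ) : biprod.inr ≫ coneι D D' n = D'.ι n ≫ biprod.inr := by
  simp [coneι]

noncomputable def coneQuotientIso (n : ℤ) : cokernel (coneι D D' n) ≅ D.Q (n + 1) ⊞ D'.Q n :=
  cokernelIsoOfEq (coneι_eq D D' n) ≪≫ cokernelBiprodMapIso (D.ι (n + 1)) (D'.ι n) ≪≫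
    biprod.mapIso (-Iso.refl _) (Iso.refl _)

theorem π_coneQuotientIso_hom (n : ℤ) :
    cokernel.π (coneι D D' n) ≫ (coneQuotientIso D D' n).hom =
      biprod.map (-cokernel.π (D.ι (n + 1))) (cokernel.π (D'.ι n)) := by
  ext <;> simp [coneQuotientIso]

theorem coneφ_comp_coneQuotientIso_hom {f : ∀ n : ℤ, D.X n ⟶ D'.X n}
    {fM : ∀ n : ℤ, D.M n ⟶ D'.M n} (hfM : ∀ n : ℤ, fM n ≫ D'.ι n = D.ι n ≫ f n) (n : ℤ) :
    coneφ D D' f n ≫ (coneQuotientIso D D' (n + 1)).hom = biprod.map (D.φ (n + 1)) (D'.φ n) := by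
  have hf : D.ι (n + 1) ≫ f (n + 1) ≫ cokernel.π (D'.ι (n + 1)) = 0 := by
    rw [← reassoc_of% hfM, cokernel.condition, comp_zero]
  ext <;> simp [coneφ, coned, DecoratedComplex.φ, reassoc_of% inl_coneι, reassoc_of% inr_coneι,
    reassoc_of% π_coneQuotientIso_hom, hf]

end DecoratedCone

open DecoratedComplex DecoratedCone in
theorem decorated_cone_cohomology_general {A : Type u} [Category.{v} A] [Abelian A]
    (D D' : DecoratedComplex A)
    (f : ∀ n : ℤ, D.X n ⟶ D'.X n) (fM : ∀ n : ℤ, D.M n ⟶ D'.M n)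
    (hfM : ∀ n : ℤ, fM n ≫ D'.ι n = D.ι n ≫ f n) :
    ∀ n : ℤ,
      Nonempty (kernel (coneφ D D' f n) ≅ kernel (D.φ (n + 1)) ⊞ kernel (D'.φ n)) ∧
      Nonempty (cokernel (coneφ D D' f n) ≅ cokernel (D.φ (n + 1)) ⊞ cokernel (D'.φ n)) := by
  intro n
  have hφ := coneφ_comp_coneQuotientIso_hom D D' hfM n
  exact ⟨⟨(kernelCompMono _ _).symm ≪≫ kernelIsoOfEq hφ ≪≫ kernelBiprodMapIso _ _⟩,
    ⟨(cokernelCompIsIso _ _).symm ≪≫ cokernelIsoOfEq hφ ≪≫ cokernelBiprodMapIso _ _⟩⟩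

open DecoratedComplex DecoratedCone in
/-- `H^{i,n}(Cone(f)) ≅ H^{i,n+1}(E•,M•) ⊕ H^{i,n}(F•,N•)` for `i = -1, 0`. -/
theorem decorated_cone_cohomology {A : Type u} [Category.{v} A] [Abelian A]
    (D D' : DecoratedComplex A)
    (f : ∀ n : ℤ, D.X n ⟶ D'.X n) (fM : ∀ n : ℤ, D.M n ⟶ D'.M n)
    (comm : ∀ n : ℤ, f n ≫ D'.d n = D.d n ≫ f (n + 1))
    (hfM : ∀ n : ℤ, fM n ≫ D'.ι n = D.ι n ≫ f n) :
    ∀ n : ℤ,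
      Nonempty (kernel (coneφ D D' f n) ≅ kernel (D.φ (n + 1)) ⊞ kernel (D'.φ n)) ∧
      Nonempty (cokernel (coneφ D D' f n) ≅ cokernel (D.φ (n + 1)) ⊞ cokernel (D'.φ n)) :=
  decorated_cone_cohomology_general D D' f fM hfM
end

section
/- Let (𝒯, ℱ) be a torsion pair on an abelian category A, E• a cochain complex in A, and Aⁿ ⊆ Eⁿ the subobjects with im(δ^{n-1}) ⊆ Aⁿ ⊆ ker(δⁿ), Aⁿ/im(δ^{n-1}) ∈ 𝒯, ker(δⁿ)/Aⁿ ∈ ℱ. Define ℍⁿ(E•) to be the two-term complex [Eⁿ/Aⁿ → A^{n+1}] (with map induced by δⁿ). Then for every n there is a short exact sequence 0 → H⁰(ℍ^{n-1}(E•)) → Hⁿ(E•) → H^{-1}(ℍⁿ(E•)) → 0, where H⁰(ℍ^{n-1}(E•)) = A^{n}/im(δ^{n-1}) ∈ 𝒯 and H^{-1}(ℍⁿ(E•)) = ker(δⁿ)/Aⁿ ∈ ℱ. -/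
open CategoryTheory CategoryTheory.Limits

universe v u

/-- A torsion pair (torsion theory) on an abelian category. -/
structure TorsionPair (A : Type u) [Category.{v} A] [Abelian A] where
  /-- the torsion class -/
  T : A → Prop
  /-- the torsion-free class -/
  F : A → Prop
  T_iso : ∀ {X Y : A}, (X ≅ Y) → T X → T Y
  F_iso : ∀ {X Y : A}, (X ≅ Y) → F X → F Y
  hom_zero : ∀ {X Y : A}, T X → F Y → ∀ f : X ⟶ Y, f = 0
  exists_ses : ∀ X : A, ∃ (t f : A) (i : t ⟶ X) (p : X ⟶ f) (w : i ≫ p = 0),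
    T t ∧ F f ∧ (ShortComplex.mk i p w).ShortExact

/-! The sequence is the third isomorphism theorem `A / im δ ↪ ker δ / im δ ↠ ker δ / A`, i.e. the
sequence of cokernels attached to the composite of the inclusions `im δ ↪ A ↪ ker δ`. -/

namespace CategoryTheory.Abelian

variable {C : Type u} [Category.{v} C] [Abelian C] {X Y Z : C} (f : X ⟶ Y) (g : Y ⟶ Z)

noncomputable abbrev cokernelCompShortComplex : ShortComplex C :=
  ShortComplex.mk (cokernel.map f (f ≫ g) (𝟙 X) g (by simp))
    (cokernel.desc (f ≫ g) (cokernel.π g) (by simp)) (by ext; simp)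

lemma cokernelCompShortComplex_exact : (cokernelCompShortComplex f g).Exact :=
  ShortComplex.exact_of_g_is_cokernel _ <| CokernelCofork.IsColimit.ofπ' _ _ fun k hk =>
    ⟨cokernel.desc g (cokernel.π (f ≫ g) ≫ k) (by simpa using cokernel.π f ≫= hk),
      by ext; simp⟩

lemma cokernelCompShortComplex_shortExact [Mono g] :
    (cokernelCompShortComplex f g).ShortExact where
  exact := cokernelCompShortComplex_exact f g
  -- `g` mono makes the square `f ≫ g = 𝟙 X ≫ (f ≫ g)` a pullback
  mono_f := mono_cokernel_map_of_isPullback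
    (IsPullback.of_vert_isIso_mono (f := g) (CommSq.mk (Category.id_comp _).symm))
  epi_g := epi_of_epi_fac (cokernel.π_desc _ _ _)

end CategoryTheory.Abelian

/-- Given a torsion pair, a two-step complex `f : X ⟶ Y`, `g : Y ⟶ Z` (representing
`δ^{n-1}, δⁿ`), and the interpolating subobject `A` with `im f ⊆ A ⊆ ker g`,
`A/im f ∈ 𝒯` and `ker g/A ∈ ℱ`, there is a short exact sequence
`0 → H⁰(ℍ^{n-1}) → Hⁿ → H^{-1}(ℍⁿ) → 0`, i.e.
`0 → A/im f → ker g/im f → ker g/A → 0`, whose left term lies in `𝒯` and whose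
right term lies in `ℱ`. -/
theorem cohomology_torsion_ses {A : Type u} [Category.{v} A] [Abelian A]
    (tp : TorsionPair A) {X Y Z : A} (f : X ⟶ Y) (g : Y ⟶ Z) (w : f ≫ g = 0)
    (Asub : Subobject Y)
    (h1 : imageSubobject f ≤ Asub) (h2 : Asub ≤ kernelSubobject g)
    (hT : tp.T (cokernel (Subobject.ofLE _ _ h1)))
    (hF : tp.F (cokernel (Subobject.ofLE _ _ h2))) :
    tp.T (cokernel (Subobject.ofLE _ _ h1)) ∧
    tp.F (cokernel (Subobject.ofLE _ _ h2)) ∧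
    ∃ (i : cokernel (Subobject.ofLE _ _ h1) ⟶ cokernel (imageToKernel f g w))
      (p : cokernel (imageToKernel f g w) ⟶ cokernel (Subobject.ofLE _ _ h2))
      (w' : i ≫ p = 0),
      (ShortComplex.mk i p w').ShortExact := by
  refine ⟨hT, hF, ?_⟩
  rw [imageToKernel, ← Subobject.ofLE_comp_ofLE _ _ _ h1 h2]
  exact ⟨_, _, _, Abelian.cokernelCompShortComplex_shortExact _ _⟩
end

section
/- Let (𝒯, ℱ) be a torsion pair on an abelian category A and let (E•, M•) be a decorated complex compatible with the torsion pair, i.e., H^{-1,n}(E•,M•) = Mⁿ ∩ δ^{-1}(M^{n+1}) ∈ ℱ and H^{0,n}(E•,M•) = Eⁿ/(Mⁿ + δ(M^{n-1})) ∈ 𝒯 for all n. Let f : F• → E• be a chain map such that each fⁿ : Fⁿ → Eⁿ is an epimorphism with kernel in ℱ. Then the induced decoration (f⁻¹(M))ⁿ := (fⁿ)⁻¹(Mⁿ) on F• is also compatible with (𝒯, ℱ). -/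
open CategoryTheory CategoryTheory.Limits

universe v u

/-!
Since `fⁿ⁺¹` is epi, the pullback square gives `Fⁿ⁺¹/(fⁿ⁺¹)⁻¹Mⁿ⁺¹ ≅ Eⁿ⁺¹/Mⁿ⁺¹`, and under this
identification the map `φ` of the pulled-back decoration becomes `φ` precomposed with the
epimorphism `(fⁿ)⁻¹Mⁿ ↠ Mⁿ`, whose kernel is `ker fⁿ`. Precomposing with an epimorphism does not
change the cokernel, so `H^{0,n}` is unchanged, while `H^{-1,n}` becomes an extension of a subobject
of `H^{-1,n}(E•, M•)` by `ker fⁿ`, hence stays in `ℱ`.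
-/

namespace TorsionPair

variable {A : Type u} [Category.{v} A] [Abelian A] (tp : TorsionPair A)

lemma F_of_hom_eq_zero {X : A} (h : ∀ t : A, tp.T t → ∀ g : t ⟶ X, g = 0) : tp.F X := by
  obtain ⟨t, _, i, p, _, ht, hf, hses⟩ := tp.exists_ses X
  have : Mono p := hses.exact.mono_g (h t ht i)
  have := hses.epi_g
  have : IsIso p := isIso_of_mono_of_epi p
  exact tp.F_iso (asIso p).symm hf

-- `kernel a ⟶ kernel (a ≫ b) ⟶ kernel b` is exact: this is closure of `ℱ` under extensions and
-- subobjects.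
lemma F_kernel_comp {X Y Z : A} {a : X ⟶ Y} {b : Y ⟶ Z}
    (ha : tp.F (kernel a)) (hb : tp.F (kernel b)) : tp.F (kernel (a ≫ b)) := by
  refine tp.F_of_hom_eq_zero fun t ht x => ?_
  have hxa : x ≫ kernel.ι (a ≫ b) ≫ a = 0 := by
    rw [← kernel.lift_ι b (x ≫ kernel.ι (a ≫ b) ≫ a) (by simp),
      tp.hom_zero ht hb (kernel.lift _ _ _), zero_comp]
  have hx : x ≫ kernel.ι (a ≫ b) = 0 := by
    rw [← kernel.lift_ι a (x ≫ kernel.ι (a ≫ b)) (by simpa using hxa),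
      tp.hom_zero ht ha (kernel.lift _ _ _), zero_comp]
  exact zero_of_comp_mono _ hx

end TorsionPair

section PullbackAlongEpi

variable {A : Type u} [Category.{v} A] [Abelian A] {X Y M : A} (f : Y ⟶ X) (ι : M ⟶ X)

lemma isIso_kernel_map_pullback_snd :
    IsIso (kernel.map (pullback.snd f ι) f (pullback.fst f ι) ι pullback.condition.symm) :=
  isIso_kernel_map_of_isPullback (IsPullback.of_hasPullback f ι).flip

lemma isIso_cokernel_map_pullback_fst [Epi f] :
    IsIso (cokernel.map (pullback.fst f ι) ι (pullback.snd f ι) f pullback.condition) := by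
  have := Abelian.mono_cokernel_map_of_isPullback (IsPullback.of_hasPullback f ι)
  have : Epi (cokernel.map (pullback.fst f ι) ι (pullback.snd f ι) f pullback.condition) :=
    epi_of_epi_fac (cokernel.π_desc _ _ _)
  exact isIso_of_mono_of_epi _

end PullbackAlongEpi

namespace DecoratedComplex

variable {A : Type u} [Category.{v} A] [Abelian A] (D : DecoratedComplex A)

lemma pullback_snd_comp_φ {n : ℤ} {Y₀ Y₁ : A} (dY : Y₀ ⟶ Y₁) (f₀ : Y₀ ⟶ D.X n)
    (f₁ : Y₁ ⟶ D.X (n + 1)) (comm : f₀ ≫ D.d n = dY ≫ f₁) :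
    pullback.snd f₀ (D.ι n) ≫ D.φ n =
      (pullback.fst f₀ (D.ι n) ≫ dY ≫ cokernel.π (pullback.fst f₁ (D.ι (n + 1)))) ≫
        cokernel.map _ _ _ _ pullback.condition := by
  simp only [φ, Category.assoc, cokernel.π_desc]
  rw [← reassoc_of% comm, pullback.condition_assoc]

end DecoratedComplex

open DecoratedComplex in
theorem pulledback_decoration_compatible_general {A : Type u} [Category.{v} A] [Abelian A]
    (tp : TorsionPair A) (D : DecoratedComplex A)
    (hcompat : ∀ n : ℤ, tp.F (kernel (D.φ n)) ∧ tp.T (cokernel (D.φ n)))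
    (Y : ℤ → A) (dY : ∀ n : ℤ, Y n ⟶ Y (n + 1))
    (f : ∀ n : ℤ, Y n ⟶ D.X n)
    (hepi : ∀ n : ℤ, Epi (f n))
    (hker : ∀ n : ℤ, tp.F (kernel (f n)))
    (comm : ∀ n : ℤ, f n ≫ D.d n = dY n ≫ f (n + 1)) :
    ∀ n : ℤ,
      tp.F (kernel ((pullback.fst (f n) (D.ι n)) ≫ dY n ≫
        cokernel.π (pullback.fst (f (n + 1)) (D.ι (n + 1))))) ∧
      tp.T (cokernel ((pullback.fst (f n) (D.ι n)) ≫ dY n ≫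
        cokernel.π (pullback.fst (f (n + 1)) (D.ι (n + 1))))) := by
  intro n
  have hsq := D.pullback_snd_comp_φ (dY n) (f n) (f (n + 1)) (comm n)
  have := isIso_kernel_map_pullback_snd (f n) (D.ι n)
  have := isIso_cokernel_map_pullback_fst (f (n + 1)) (D.ι (n + 1))
  have : Epi (pullback.snd (f n) (D.ι n)) := Abelian.epi_pullback_of_epi_f _ _
  constructor
  · have hsnd := tp.F_iso
      (asIso (kernel.map _ _ _ _ (pullback.condition (f := f n) (g := D.ι n)).symm)).symm (hker n)
    have := hsq ▸ tp.F_kernel_comp hsnd (hcompat n).1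
    exact tp.F_iso (kernelCompMono _ _) this
  · refine tp.T_iso ?_ (hcompat n).2
    exact (cokernelEpiComp _ _).symm ≪≫ cokernelIsoOfEq hsq ≪≫ cokernelCompIsIso _ _

open DecoratedComplex in
/-- If `(E•, M•)` is compatible with the torsion pair and `f : F• → E•` is a chain map
which is degreewise epimorphic with kernels in `ℱ`, then the pulled-back decoration
`(fⁿ)⁻¹(Mⁿ)` on `F•` is also compatible with the torsion pair. -/
theorem pulledback_decoration_compatible {A : Type u} [Category.{v} A] [Abelian A]
    (tp : TorsionPair A) (D : DecoratedComplex A)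
    (hcompat : ∀ n : ℤ, tp.F (kernel (D.φ n)) ∧ tp.T (cokernel (D.φ n)))
    (Y : ℤ → A) (dY : ∀ n : ℤ, Y n ⟶ Y (n + 1))
    (sqY : ∀ n : ℤ, dY n ≫ dY (n + 1) = 0)
    (f : ∀ n : ℤ, Y n ⟶ D.X n)
    (hepi : ∀ n : ℤ, Epi (f n))
    (hker : ∀ n : ℤ, tp.F (kernel (f n)))
    (comm : ∀ n : ℤ, f n ≫ D.d n = dY n ≫ f (n + 1)) :
    ∀ n : ℤ,
      tp.F (kernel ((pullback.fst (f n) (D.ι n)) ≫ dY n ≫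
        cokernel.π (pullback.fst (f (n + 1)) (D.ι (n + 1))))) ∧
      tp.T (cokernel ((pullback.fst (f n) (D.ι n)) ≫ dY n ≫
        cokernel.π (pullback.fst (f (n + 1)) (D.ι (n + 1))))) :=
  pulledback_decoration_compatible_general tp D hcompat Y dY f hepi hker comm
end

section
/- Let A be an abelian category with a torsion pair (𝒯, ℱ) and let f : X⁻¹ → Y⁻¹, together with a homotopy datum, give a 'strict morphism' between two-term complexes [X⁻¹ → X⁰] and [Y⁻¹ → Y⁰] whose kernels lie in ℱ and cokernels in 𝒯. Then the strict morphism (f⁻¹, f⁰) represents the zero morphism in the tilted category B if and only if there exists s : X⁰ → Y⁻¹ with f⁰ = d_Y ∘ s and f⁻¹ = s ∘ d_X, i.e., (f⁻¹, f⁰) is null-homotopic as a map of chain complexes. -/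
open CategoryTheory CategoryTheory.Limits

universe v u

/-!
An isomorphism of butterflies from the one of `(f⁻¹, f⁰)` to the one of `0` is an
automorphism `h` of `X⁰ ⊕ Y⁻¹` with `inr ≫ h = inr` and `h ≫ fst = fst`, i.e. a unipotent
upper triangular matrix `(1 s; 0 1)`. Its compatibility with the remaining two wings says exactly `d_X ≫ s = f⁻¹` and `s ≫ d_Y = f⁰`.
-/

namespace CategoryTheory.Biprod

variable {C : Type*} [Category C] [Preadditive C] [HasBinaryBiproducts C] {X₁ X₂ : C}

theorem eq_unipotentUpper_of_inr_comp_of_comp_fst (g : X₁ ⊞ X₂ ⟶ X₁ ⊞ X₂)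
    (hinr : biprod.inr ≫ g = biprod.inr) (hfst : g ≫ biprod.fst = biprod.fst) :
    g = (unipotentUpper (biprod.inl ≫ g ≫ biprod.snd)).hom := by
  conv_lhs => rw [← ofComponents_eq g]
  rw [hfst, reassoc_of% hinr]
  simp

theorem lift_comp_unipotentUpper_hom {W : C} (a : W ⟶ X₁) (b : W ⟶ X₂) (r : X₁ ⟶ X₂) :
    biprod.lift a b ≫ (unipotentUpper r).hom = biprod.lift a (a ≫ r + b) := by
  ext <;> simp

theorem unipotentUpper_hom_comp_desc {Z : C} (r : X₁ ⟶ X₂) (u : X₁ ⟶ Z) (v : X₂ ⟶ Z) :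
    (unipotentUpper r).hom ≫ biprod.desc u v = biprod.desc (u + r ≫ v) v := by
  ext <;> simp [ofComponents]

end CategoryTheory.Biprod

theorem strict_morphism_zero_iff_nullhomotopic_general {A : Type u} [Category.{v} A] [Abelian A]
    {Xm X0 Ym Y0 : A}
    (dX : Xm ⟶ X0) (dY : Ym ⟶ Y0)
    (f1 : Xm ⟶ Ym) (f0 : X0 ⟶ Y0) :
    (∃ h : (X0 ⊞ Ym) ≅ (X0 ⊞ Ym),
        biprod.lift dX (-f1) ≫ h.hom = biprod.lift dX 0 ∧
        (biprod.inr : Ym ⟶ X0 ⊞ Ym) ≫ h.hom = biprod.inr ∧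
        h.hom ≫ (biprod.fst : X0 ⊞ Ym ⟶ X0) = biprod.fst ∧
        h.hom ≫ biprod.desc (0 : X0 ⟶ Y0) dY = biprod.desc f0 dY) ↔
      ∃ s : X0 ⟶ Ym, f0 = s ≫ dY ∧ f1 = dX ≫ s := by
  constructor
  · rintro ⟨h, hlift, hinr, hfst, hdesc⟩
    have hunip := Biprod.eq_unipotentUpper_of_inr_comp_of_comp_fst h.hom hinr hfst
    set s := biprod.inl ≫ h.hom ≫ biprod.snd
    rw [hunip, Biprod.lift_comp_unipotentUpper_hom] at hlift
    rw [hunip, Biprod.unipotentUpper_hom_comp_desc] at hdesc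
    refine ⟨s, ?_, ?_⟩
    · simpa using congr(biprod.inl ≫ $hdesc).symm
    · have hs : dX ≫ s + -f1 = 0 := by simpa using congr($hlift ≫ biprod.snd)
      exact (add_neg_eq_zero.mp hs).symm
  · rintro ⟨s, rfl, rfl⟩
    refine ⟨Biprod.unipotentUpper s, ?_, by simp, by simp, ?_⟩
    · rw [Biprod.lift_comp_unipotentUpper_hom]
      simp
    · rw [Biprod.unipotentUpper_hom_comp_desc]
      simp

/-- A strict morphism `(f⁻¹, f⁰)` between objects `[X⁻¹ → X⁰]`, `[Y⁻¹ → Y⁰]` of the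
tilted category `B` is the zero morphism of `B` (i.e. its butterfly, with middle term
`X⁰ ⊕ Y⁻¹`, is isomorphic to the butterfly representing `0`) if and only if it is
null-homotopic as a map of chain complexes. -/
theorem strict_morphism_zero_iff_nullhomotopic {A : Type u} [Category.{v} A] [Abelian A]
    (tp : TorsionPair A) {Xm X0 Ym Y0 : A}
    (dX : Xm ⟶ X0) (dY : Ym ⟶ Y0)
    (hXker : tp.F (kernel dX)) (hXcoker : tp.T (cokernel dX))
    (hYker : tp.F (kernel dY)) (hYcoker : tp.T (cokernel dY))
    (f1 : Xm ⟶ Ym) (f0 : X0 ⟶ Y0)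
    (hchain : f1 ≫ dY = dX ≫ f0) :
    (∃ h : (X0 ⊞ Ym) ≅ (X0 ⊞ Ym),
        biprod.lift dX (-f1) ≫ h.hom = biprod.lift dX 0 ∧
        (biprod.inr : Ym ⟶ X0 ⊞ Ym) ≫ h.hom = biprod.inr ∧
        h.hom ≫ (biprod.fst : X0 ⊞ Ym ⟶ X0) = biprod.fst ∧
        h.hom ≫ biprod.desc (0 : X0 ⟶ Y0) dY = biprod.desc f0 dY) ↔
      ∃ s : X0 ⟶ Ym, f0 = s ≫ dY ∧ f1 = dX ≫ s :=
  strict_morphism_zero_iff_nullhomotopic_general dX dY f1 f0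
end

section
/- Let A be an abelian category with enough injectives and (𝒯, ℱ) a torsion pair on A. Then for every object 𝕏 = [X⁻¹ → X⁰] of the tilted category B there exists a semi-injective object 𝕀 = [I → I⁰] of B (i.e., with I injective in A) and a strict morphism 𝕏 → 𝕀 which is an isomorphism in B. Dually, if A has enough projectives, every object of B admits a strict isomorphism ℙ → 𝕏 from a semi-projective object ℙ = [P⁻¹ → P] with P projective. Concretely: given a monomorphism X⁻¹ ↪ I with I injective, 𝕀 = [I → X⁰ ⊔_{X⁻¹} I] (pushout) works; given an epimorphism P ↠ X⁰ with P projective, ℙ = [P ×_{X⁰} X⁻¹ → P] (pullback) works. -/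
open CategoryTheory CategoryTheory.Limits

universe v u

/-!
The strict morphism `[X⁻¹ → X⁰] → [I → X⁰ ⊔_{X⁻¹} I]` is a pushout square. A pushout square
induces an isomorphism on the cokernels of its horizontal maps and an epimorphism on their
kernels, which is also mono as soon as `X⁻¹ ↪ I` is. So the new complex again has kernel in `ℱ`
and cokernel in `𝒯`, and its NW–SE sequence `X⁻¹ → X⁰ ⊕ I → X⁰ ⊔_{X⁻¹} I` is right exact
because the square is a pushout, and left exact because `X⁻¹ ↪ I` is mono. Dually for the
pullback along an epimorphism `P ↠ X⁰`.
-/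

namespace CategoryTheory

variable {C : Type u} [Category.{v} C] [Abelian C] {X₁ X₂ X₃ X₄ : C}
  {t : X₁ ⟶ X₂} {l : X₁ ⟶ X₃} {r : X₂ ⟶ X₄} {b : X₃ ⟶ X₄}

namespace IsPushout

lemma isIso_kernel_map_of_mono (sq : IsPushout t l r b) [Mono l] :
    IsIso (kernel.map _ _ _ _ sq.w) :=
  have := Abelian.epi_kernel_map_of_isPushout sq
  have : Mono (kernel.map _ _ _ _ sq.w) := mono_of_mono_fac (kernel.lift_ι _ _ _)
  isIso_of_mono_of_epi _

lemma shortExact_biprod (sq : IsPushout t l r b) [Mono l] :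
    (ShortComplex.mk (biprod.lift t (-l)) (biprod.desc r b) (by simp [sq.w])).ShortExact := by
  have hl : biprod.lift t (-l) ≫ (-biprod.snd) = l := by simp
  have : Mono (biprod.lift t (-l)) := mono_of_mono_fac hl
  have : Epi (biprod.desc r b) := sq.epi_shortComplex_g
  exact ⟨sq.exact_shortComplex⟩

end IsPushout

namespace IsPullback

lemma isIso_cokernel_map_of_epi (sq : IsPullback t l r b) [Epi r] :
    IsIso (cokernel.map _ _ _ _ sq.w) :=
  have := Abelian.mono_cokernel_map_of_isPullback sq
  have : Epi (cokernel.map _ _ _ _ sq.w) := epi_of_epi_fac (cokernel.π_desc _ _ _)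
  isIso_of_mono_of_epi _

lemma shortExact_biprod (sq : IsPullback t l r b) [Epi r] :
    (ShortComplex.mk (biprod.lift t (-l)) (biprod.desc r b) (by simp [sq.w])).ShortExact := by
  have : Mono (biprod.lift t l) := sq.mono_shortComplex'_f
  have : Epi (biprod.desc r (-b)) := epi_of_epi_fac (f := biprod.inl) (h := r) (by simp)
  have hS : (ShortComplex.mk (biprod.lift t l) (biprod.desc r (-b)) (by simp [sq.w])).ShortExact :=
    ⟨sq.exact_shortComplex'⟩
  -- Mathlib's exact sequence of a pullback square puts the sign on `b` rather than on `l`.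
  refine ShortComplex.shortExact_of_iso ?_ hS
  refine ShortComplex.isoMk (Iso.refl _)
    ⟨biprod.map (𝟙 X₂) (-𝟙 X₃), biprod.map (𝟙 X₂) (-𝟙 X₃), ?_, ?_⟩ (Iso.refl _) ?_ ?_ <;>
    ext <;> simp

end IsPullback

end CategoryTheory

namespace TorsionPair

variable {A : Type u} [Category.{v} A] [Abelian A] (tp : TorsionPair A) {X₁ X₂ X₃ X₄ : A}
  {t : X₁ ⟶ X₂} {l : X₁ ⟶ X₃} {r : X₂ ⟶ X₄} {b : X₃ ⟶ X₄}

lemma F_kernel_of_isPushout (sq : IsPushout t l r b) [Mono l] (h : tp.F (kernel t)) :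
    tp.F (kernel b) :=
  have := sq.isIso_kernel_map_of_mono
  tp.F_iso (asIso (kernel.map _ _ _ _ sq.w)) h

lemma T_cokernel_of_isPushout (sq : IsPushout t l r b) (h : tp.T (cokernel t)) :
    tp.T (cokernel b) :=
  have := isIso_cokernel_map_of_isPushout sq
  tp.T_iso (asIso (cokernel.map _ _ _ _ sq.w)) h

lemma F_kernel_of_isPullback (sq : IsPullback t l r b) (h : tp.F (kernel b)) :
    tp.F (kernel t) :=
  have := isIso_kernel_map_of_isPullback sq
  tp.F_iso (asIso (kernel.map _ _ _ _ sq.w)).symm h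

lemma T_cokernel_of_isPullback (sq : IsPullback t l r b) [Epi r] (h : tp.T (cokernel b)) :
    tp.T (cokernel t) :=
  have := sq.isIso_cokernel_map_of_epi
  tp.T_iso (asIso (cokernel.map _ _ _ _ sq.w)).symm h

end TorsionPair

/-- Semi-injective and semi-projective resolutions of objects of the tilted
category `B`. If `A` has enough injectives, every object `[X⁻¹ → X⁰]` of `B` admits a
strict morphism to a semi-injective object which is an isomorphism in `B`; dually with
enough projectives. Concretely, the pushout along a monomorphism `X⁻¹ ↪ I` into an
injective (resp. the pullback along an epimorphism `P ↠ X⁰ `from a projective) works;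
here being an isomorphism in `B` is expressed by the exactness of the NW–SE sequence
`0 → X⁻¹ → X⁰ ⊕ Y⁻¹ → Y⁰ → 0` of the strict morphism. -/
theorem semiInjective_semiProjective_resolutions
    {A : Type u} [Category.{v} A] [Abelian A] (tp : TorsionPair A)
    {Xm X0 : A} (d : Xm ⟶ X0) (hker : tp.F (kernel d)) (hcoker : tp.T (cokernel d)) :
    -- concretely: the pushout construction
    (∀ (I : A) (u : Xm ⟶ I), Mono u → Injective I →
      tp.F (kernel (pushout.inr d u)) ∧ tp.T (cokernel (pushout.inr d u)) ∧
      d ≫ pushout.inl d u = u ≫ pushout.inr d u ∧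
      ∃ w : biprod.lift d (-u) ≫ biprod.desc (pushout.inl d u) (pushout.inr d u) = 0,
        (ShortComplex.mk _ _ w).ShortExact) ∧
    -- concretely: the pullback construction
    (∀ (P : A) (p : P ⟶ X0), Epi p → Projective P →
      tp.F (kernel (pullback.fst p d)) ∧ tp.T (cokernel (pullback.fst p d)) ∧
      pullback.snd p d ≫ d = pullback.fst p d ≫ p ∧
      ∃ w : biprod.lift (pullback.fst p d) (-(pullback.snd p d)) ≫ biprod.desc p d = 0,
        (ShortComplex.mk _ _ w).ShortExact) ∧
    -- existence of a semi-injective resolution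
    (EnoughInjectives A →
      ∃ (I P' : A) (u : Xm ⟶ I) (dI : I ⟶ P') (g0 : X0 ⟶ P'),
        Injective I ∧ tp.F (kernel dI) ∧ tp.T (cokernel dI) ∧
        d ≫ g0 = u ≫ dI ∧
        ∃ w : biprod.lift d (-u) ≫ biprod.desc g0 dI = 0,
          (ShortComplex.mk _ _ w).ShortExact) ∧
    -- existence of a semi-projective resolution
    (EnoughProjectives A →
      ∃ (P Qm : A) (dP : Qm ⟶ P) (p : P ⟶ X0) (gm : Qm ⟶ Xm),
        Projective P ∧ tp.F (kernel dP) ∧ tp.T (cokernel dP) ∧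
        dP ≫ p = gm ≫ d ∧
        ∃ w : biprod.lift dP (-gm) ≫ biprod.desc p d = 0,
          (ShortComplex.mk _ _ w).ShortExact) := by
  refine ⟨fun I u _ _ => ?_, fun P p _ _ => ?_, fun _ => ?_, fun _ => ?_⟩
  · have sq := IsPushout.of_hasPushout d u
    exact ⟨tp.F_kernel_of_isPushout sq hker, tp.T_cokernel_of_isPushout sq hcoker, sq.w, _,
      sq.shortExact_biprod⟩
  · have sq := IsPullback.of_hasPullback p d
    exact ⟨tp.F_kernel_of_isPullback sq hker, tp.T_cokernel_of_isPullback sq hcoker, sq.w.symm, _,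
      sq.shortExact_biprod⟩
  · have sq := IsPushout.of_hasPushout d (Injective.ι Xm)
    exact ⟨_, _, _, _, _, inferInstance, tp.F_kernel_of_isPushout sq hker,
      tp.T_cokernel_of_isPushout sq hcoker, sq.w, _, sq.shortExact_biprod⟩
  · have sq := IsPullback.of_hasPullback (Projective.π X0) d
    exact ⟨_, _, _, _, _, inferInstance, tp.F_kernel_of_isPullback sq hker,
      tp.T_cokernel_of_isPullback sq hcoker, sq.w, _, sq.shortExact_biprod⟩
end
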